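/- arXiv:1410.1138 — 2 statements merged into one kernel-verified Lean document; each statement's English description precedes it below -/
import Mathlib

section
/- Let E be a holomorphic vector bundle on X, V_L = J¹(L)⊗L* with projection φ : V_L → O_X, and ψ a holomorphic section of End(E) ⊗ Ṽ_L such that (Id ⊗ φ̃)(ψ) = Id_E. Then ψ ∧ ψ = 0 in H⁰(X, End(E) ⊗ Λ² Ṽ_L), where ∧ combines the Lie bracket on End(E) with the wedge product on Ṽ_L. -/
/-!
Write `d a = 1 ⊗ a - a ⊗ 1 ∈ A ⊗ A` and pair `(A ⊗ A) ⊗ V` with itself by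
`(p ⊗ v, q ⊗ w) ↦ mul'(p q) ⊗ (v ∧ w)`. Since `mul'(d a · d b) = ab - ba`, this pairing of
`(d ⊗ id) x` with `(d ⊗ id) y` is `B x y`. If `(id ⊗ φ) ψ = 1`, then `(d ⊗ id) ψ` is the value at
`(ψ, ψ)` of the bilinear map `(a ⊗ v, b ⊗ w) ↦ (b ⊗ a) ⊗ (φ(w) v - φ(v) w)`, which lands in
`(A ⊗ A) ⊗ ker φ`; the wedge vanishes on `ker φ`, so `B ψ ψ = 0`.
-/

open TensorProduct LinearMap

section

variable {R : Type*} [CommRing R] {V W : Type*} [AddCommGroup V] [Module R V]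
  [AddCommGroup W] [Module R W]

theorem map₂_lTensor_subtype_eq_zero {S P : Type*} [AddCommGroup S] [Module R S]
    [AddCommGroup P] [Module R P] (f : S →ₗ[R] S →ₗ[R] P) (wedge : V →ₗ[R] V →ₗ[R] W)
    {K : Submodule R V} (hK : ∀ v ∈ K, ∀ w ∈ K, wedge v w = 0) (p q : S ⊗[R] K) :
    map₂ f wedge (K.subtype.lTensor S p) (K.subtype.lTensor S q) = 0 := by
  have : (map₂ f wedge).compl₁₂ (K.subtype.lTensor S) (K.subtype.lTensor S) = 0 :=
    TensorProduct.ext' fun s k => TensorProduct.ext' fun t l => by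
      simp [hK k k.2 l l.2]
  exact congr($this p q)

/- Stated for two arguments because `ker (id ⊗ φ)` may be larger than the image of
`M ⊗ ker φ`; only at `x = y = ψ` does the expression become `(1 ⊗ a - a ⊗ 1) ⊗ v`. -/
theorem rTensor_mk_sub_rTensor_mk_flip_mem_range {M : Type*} [AddCommGroup M] [Module R M]
    (φ : V →ₗ[R] R) (x y : M ⊗[R] V) :
    (mk R M M (TensorProduct.rid R M (φ.lTensor M y))).rTensor V x
        - ((mk R M M).flip (TensorProduct.rid R M (φ.lTensor M x))).rTensor V y
      ∈ range ((ker φ).subtype.lTensor (M ⊗[R] M)) := by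
  induction x using TensorProduct.induction_on with
  | zero => simp
  | add x x' hx hx' =>
    convert add_mem hx hx' using 1
    simp only [map_add, rTensor_add, LinearMap.add_apply]
    abel
  | tmul a v =>
    induction y using TensorProduct.induction_on with
    | zero => simp
    | add y y' hy hy' =>
      convert add_mem hy hy' using 1
      simp only [map_add, rTensor_add, LinearMap.add_apply]
      abel
    | tmul b w =>
      refine ⟨(b ⊗ₜ a) ⊗ₜ ⟨φ w • v - φ v • w, by simp [mul_comm]⟩, ?_⟩
      simp [tmul_sub, tmul_smul, smul_tmul']

end

section

variable {R : Type*} [CommRing R] (A : Type*) [Ring A] [Algebra R A]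

noncomputable def unitDiff : A →ₗ[R] A ⊗[R] A := mk R A A 1 - (mk R A A).flip 1

variable {A}

@[simp] theorem unitDiff_apply (a : A) : unitDiff (R := R) A a = 1 ⊗ₜ a - a ⊗ₜ 1 := rfl

theorem eq_map₂_unitDiff {V W : Type*} [AddCommGroup V] [Module R V]
    [AddCommGroup W] [Module R W] (wedge : V →ₗ[R] V →ₗ[R] W)
    (B : A ⊗[R] V →ₗ[R] A ⊗[R] V →ₗ[R] A ⊗[R] W)
    (hB : ∀ (a b : A) (v w : V),
      B (a ⊗ₜ[R] v) (b ⊗ₜ[R] w) = (a * b - b * a) ⊗ₜ[R] (wedge v w)) :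
    B = (map₂ ((LinearMap.mul R (A ⊗[R] A)).compr₂ (LinearMap.mul' R A)) wedge).compl₁₂
      ((unitDiff A).rTensor V) ((unitDiff A).rTensor V) :=
  TensorProduct.ext' fun a v => TensorProduct.ext' fun b w => by
    simp [hB, mul_sub, Algebra.TensorProduct.tmul_mul_tmul]

end
theorem stmt6_general
    (R : Type) [CommRing R]
    (A : Type) [Ring A] [Algebra R A]
    (V : Type) [AddCommGroup V] [Module R V]
    (W : Type) [AddCommGroup W] [Module R W]
    (φ : V →ₗ[R] R)
    (wedge : V →ₗ[R] V →ₗ[R] W)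
    (h_ker : ∀ v w : V, φ v = 0 → φ w = 0 → wedge v w = 0)
    (B : TensorProduct R A V →ₗ[R] TensorProduct R A V →ₗ[R] TensorProduct R A W)
    (hB : ∀ (a b : A) (v w : V),
      B (a ⊗ₜ[R] v) (b ⊗ₜ[R] w) = (a * b - b * a) ⊗ₜ[R] (wedge v w))
    (ψ : TensorProduct R A V)
    (hψ : (TensorProduct.rid R A) ((LinearMap.lTensor A φ) ψ) = 1) :
    B ψ ψ = 0 := by
  obtain ⟨p, hp⟩ : (unitDiff A).rTensor V ψ ∈ range ((ker φ).subtype.lTensor (A ⊗[R] A)) := by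
    simpa [hψ, unitDiff, rTensor_sub] using rTensor_mk_sub_rTensor_mk_flip_mem_range φ ψ ψ
  rw [eq_map₂_unitDiff wedge B hB, compl₁₂_apply, ← hp]
  exact map₂_lTensor_subtype_eq_zero _ wedge (fun v hv w hw => h_ker v w hv hw) p p

theorem stmt6
    (R : Type) [CommRing R]
    (A : Type) [Ring A] [Algebra R A]
    (V : Type) [AddCommGroup V] [Module R V]
    (W : Type) [AddCommGroup W] [Module R W]
    (φ : V →ₗ[R] R)
    (wedge : V →ₗ[R] V →ₗ[R] W)
    (h_alt : ∀ v : V, wedge v v = 0)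
    (h_ker : ∀ v w : V, φ v = 0 → φ w = 0 → wedge v w = 0)
    (B : TensorProduct R A V →ₗ[R] TensorProduct R A V →ₗ[R] TensorProduct R A W)
    (hB : ∀ (a b : A) (v w : V),
      B (a ⊗ₜ[R] v) (b ⊗ₜ[R] w) = (a * b - b * a) ⊗ₜ[R] (wedge v w))
    (ψ : TensorProduct R A V)
    (hψ : (TensorProduct.rid R A) ((LinearMap.lTensor A φ) ψ) = 1) :
    B ψ ψ = 0 :=
  stmt6_general R A V W φ wedge h_ker B hB ψ hψ
end

section
/- Let E be a rank n bundle with ψ having a simple rank-one pole at p with nonzero trace residue, in the normal form where only the (1,1) entry is singular. Then the sheaf End(E)_ψ of endomorphism-valued deformations (sections φ of End(E)(C) locally of the form ψ'_reg + [α, ψ] with α, ψ'_reg holomorphic) coincides near p with the sheaf of End(E)-valued sections allowed simple poles precisely in the (1,j) and (j,1) entries for j ≠ 1. -/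
/-!
The pole of `ψ` sits only in the corner entry `ψ o o = u/x + h`, and `ψ` is block diagonal with
respect to `{o} ⊔ {i ≠ o}`. Hence in `[α, ψ]` the corner entry cancels, the entries off the row and
column of `o` are holomorphic, and the remaining hook entries are `±ψ o o · α` up to holomorphic
terms, so they have at most simple poles. Conversely, since the residue `u` is invertible, any
simple pole `m` in a hook entry equals `ψ o o · (x m / u)` up to a holomorphic term, which
prescribes the hook entries of `α`.
-/

/-- The subring of holomorphic germs (convergent/formal power series in x) inside the
field of Laurent series in the local coordinate x. -/
noncomputable def holGerms : Subring (LaurentSeries ℂ) :=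
  (HahnSeries.ofPowerSeries ℤ ℂ : PowerSeries ℂ →+* LaurentSeries ℂ).range

/-- The local coordinate x at the point p, as a Laurent series. -/
noncomputable def xCoord : LaurentSeries ℂ :=
  HahnSeries.ofPowerSeries ℤ ℂ PowerSeries.X

section CommRing

variable {K ι : Type*} [CommRing K] [Fintype ι]

/-- The local model of the sheaf `End(E)_ψ`. -/
def holCommutatorSpan (R : Subring K) (ψ : Matrix ι ι K) : Set (Matrix ι ι K) :=
  {M | ∃ α β : Matrix ι ι K, (∀ i j, α i j ∈ R) ∧ (∀ i j, β i j ∈ R) ∧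
    M = β + (α * ψ - ψ * α)}

def hookPoleMatrices (R : Subring K) (x : K) (o : ι) : Set (Matrix ι ι K) :=
  {M | M o o ∈ R ∧ (∀ i j, i ≠ o → j ≠ o → M i j ∈ R) ∧
    (∀ j, j ≠ o → x * M o j ∈ R ∧ x * M j o ∈ R)}

variable {R : Subring K} {ψ α M : Matrix ι ι K} {o : ι}

lemma mul_apply_of_col_eq_zero (hcol : ∀ k, k ≠ o → ψ k o = 0) (i : ι) :
    (α * ψ) i o = α i o * ψ o o := by
  rw [Matrix.mul_apply]
  exact Finset.sum_eq_single_of_mem o (Finset.mem_univ o) fun k _ hk => by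
    rw [hcol k hk, mul_zero]

lemma mul_apply_of_row_eq_zero (hrow : ∀ k, k ≠ o → ψ o k = 0) (j : ι) :
    (ψ * α) o j = ψ o o * α o j := by
  rw [Matrix.mul_apply]
  exact Finset.sum_eq_single_of_mem o (Finset.mem_univ o) fun k _ hk => by
    rw [hrow k hk, zero_mul]

lemma mul_apply_mem_of_col_ne (hα : ∀ i j, α i j ∈ R) (hrow : ∀ k, k ≠ o → ψ o k = 0)
    (hint : ∀ i j, i ≠ o → j ≠ o → ψ i j ∈ R) (i : ι) {j : ι} (hj : j ≠ o) :
    (α * ψ) i j ∈ R := by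
  rw [Matrix.mul_apply]
  refine R.sum_mem fun k _ => ?_
  obtain rfl | hk := eq_or_ne k o
  · rw [hrow j hj, mul_zero]
    exact R.zero_mem
  · exact R.mul_mem (hα i k) (hint k j hk hj)

lemma mul_apply_mem_of_row_ne (hα : ∀ i j, α i j ∈ R) (hcol : ∀ k, k ≠ o → ψ k o = 0)
    (hint : ∀ i j, i ≠ o → j ≠ o → ψ i j ∈ R) {i : ι} (hi : i ≠ o) (j : ι) :
    (ψ * α) i j ∈ R := by
  rw [Matrix.mul_apply]
  refine R.sum_mem fun k _ => ?_
  obtain rfl | hk := eq_or_ne k o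
  · rw [hcol i hi, zero_mul]
    exact R.zero_mem
  · exact R.mul_mem (hint i k hi hk) (hα k j)

theorem holCommutatorSpan_subset_hookPoleMatrices {x : K} (hx : x ∈ R) (hxψ : x * ψ o o ∈ R)
    (hrow : ∀ k, k ≠ o → ψ o k = 0) (hcol : ∀ k, k ≠ o → ψ k o = 0)
    (hint : ∀ i j, i ≠ o → j ≠ o → ψ i j ∈ R) :
    holCommutatorSpan R ψ ⊆ hookPoleMatrices R x o := by
  rintro _ ⟨α, β, hα, hβ, rfl⟩
  simp only [hookPoleMatrices, Set.mem_ofPred_eq, Matrix.add_apply, Matrix.sub_apply]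
  refine ⟨?_, fun i j hi hj => ?_, fun j hj => ⟨?_, ?_⟩⟩
  · rw [mul_apply_of_col_eq_zero hcol, mul_apply_of_row_eq_zero hrow, mul_comm, sub_self,
      add_zero]
    exact hβ o o
  · exact R.add_mem (hβ i j) (R.sub_mem (mul_apply_mem_of_col_ne hα hrow hint i hj)
      (mul_apply_mem_of_row_ne hα hcol hint hi j))
  · rw [mul_apply_of_row_eq_zero hrow,
      show ∀ a b c : K, x * (a + (b - ψ o o * c)) = x * a + (x * b - x * ψ o o * c) by
        intros; ring]
    exact R.add_mem (R.mul_mem hx (hβ o j)) (R.sub_mem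
      (R.mul_mem hx (mul_apply_mem_of_col_ne hα hrow hint o hj)) (R.mul_mem hxψ (hα o j)))
  · rw [mul_apply_of_col_eq_zero hcol,
      show ∀ a b c : K, x * (a + (c * ψ o o - b)) = x * a + (x * ψ o o * c - x * b) by
        intros; ring]
    exact R.add_mem (R.mul_mem hx (hβ j o)) (R.sub_mem (R.mul_mem hxψ (hα j o))
      (R.mul_mem hx (mul_apply_mem_of_row_ne hα hcol hint hj o)))

lemma sub_commutator_mem (hα : ∀ i j, α i j ∈ R)
    (hαcol : ∀ i, i ≠ o → M i o - α i o * ψ o o ∈ R)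
    (hαrow : ∀ j, j ≠ o → M o j + ψ o o * α o j ∈ R)
    (hrow : ∀ k, k ≠ o → ψ o k = 0) (hcol : ∀ k, k ≠ o → ψ k o = 0)
    (hint : ∀ i j, i ≠ o → j ≠ o → ψ i j ∈ R) {x : K} (hM : M ∈ hookPoleMatrices R x o)
    (i j : ι) : (M - (α * ψ - ψ * α)) i j ∈ R := by
  obtain ⟨hMoo, hMint, -⟩ := hM
  rw [Matrix.sub_apply, Matrix.sub_apply]
  rcases eq_or_ne o i with rfl | hi <;> rcases eq_or_ne o j with rfl | hj
  · rwa [mul_apply_of_col_eq_zero hcol, mul_apply_of_row_eq_zero hrow, mul_comm, sub_self,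
      sub_zero]
  · rw [mul_apply_of_row_eq_zero hrow, sub_sub_eq_add_sub]
    exact R.sub_mem (hαrow j hj.symm) (mul_apply_mem_of_col_ne hα hrow hint o hj.symm)
  · rw [mul_apply_of_col_eq_zero hcol, sub_sub_eq_add_sub, add_sub_right_comm]
    exact R.add_mem (hαcol i hi.symm) (mul_apply_mem_of_row_ne hα hcol hint hi.symm o)
  · exact R.sub_mem (hMint i j hi.symm hj.symm)
      (R.sub_mem (mul_apply_mem_of_col_ne hα hrow hint i hj.symm)
        (mul_apply_mem_of_row_ne hα hcol hint hi.symm j))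

end CommRing

section Field

variable {K ι : Type*} [Field K] [Fintype ι] [DecidableEq ι] {R : Subring K} {o : ι}

lemma sub_mul_inv_mul_mem {x u h m : K} (hx : x ≠ 0) (hu : u ≠ 0) (hu' : u⁻¹ ∈ R) (hh : h ∈ R)
    (hm : x * m ∈ R) : m - (u * x⁻¹ + h) * (u⁻¹ * (x * m)) ∈ R := by
  have : m - (u * x⁻¹ + h) * (u⁻¹ * (x * m)) = -(h * (u⁻¹ * (x * m))) := by
    field_simp
    ring
  rw [this]
  exact R.neg_mem (R.mul_mem hh (R.mul_mem hu' hm))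

theorem hookPoleMatrices_subset_holCommutatorSpan {ψ : Matrix ι ι K} {x u h : K} (hx : x ∈ R)
    (hx₀ : x ≠ 0) (hu : u ≠ 0) (hu' : u⁻¹ ∈ R) (hh : h ∈ R) (hψoo : ψ o o = u * x⁻¹ + h)
    (hrow : ∀ k, k ≠ o → ψ o k = 0) (hcol : ∀ k, k ≠ o → ψ k o = 0)
    (hint : ∀ i j, i ≠ o → j ≠ o → ψ i j ∈ R) :
    hookPoleMatrices R x o ⊆ holCommutatorSpan R ψ := by
  intro M hM
  obtain ⟨hMoo, -, hMhook⟩ := id hM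
  let α : Matrix ι ι K := Matrix.of fun i j =>
    u⁻¹ * (x * if j = o then M i o else if i = o then -M o j else 0)
  have hα : ∀ i j, α i j ∈ R := by
    intro i j
    refine R.mul_mem hu' ?_
    split_ifs with hj hi
    · obtain rfl | hi := eq_or_ne i o
      · exact R.mul_mem hx hMoo
      · exact (hMhook i hi).2
    · rw [mul_neg]
      exact R.neg_mem (hMhook j hj).1
    · rw [mul_zero]
      exact R.zero_mem
  refine ⟨α, M - (α * ψ - ψ * α), hα, sub_commutator_mem hα (fun i hi => ?_) (fun j hj => ?_)
    hrow hcol hint hM, (sub_add_cancel M _).symm⟩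
  · simpa [α, hψoo, mul_comm] using sub_mul_inv_mul_mem hx₀ hu hu' hh (hMhook i hi).2
  · simpa [α, hj, hψoo, sub_eq_add_neg] using sub_mul_inv_mul_mem hx₀ hu hu' hh (hMhook j hj).1

end Field

lemma xCoord_mem_holGerms : xCoord ∈ holGerms := ⟨PowerSeries.X, rfl⟩

lemma C_mem_holGerms (a : ℂ) : HahnSeries.C a ∈ holGerms :=
  ⟨PowerSeries.C a, HahnSeries.ofPowerSeries_C a⟩

lemma xCoord_ne_zero : xCoord ≠ 0 :=
  (map_ne_zero_iff _ HahnSeries.ofPowerSeries_injective).mpr PowerSeries.X_ne_zero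

theorem stmt17
    (n : ℕ) [NeZero n]
    (aRes : ℂ) (h_res_ne : aRes ≠ 0)
    (h₀ : LaurentSeries ℂ) (h_h₀ : h₀ ∈ holGerms)
    (ψ : Matrix (Fin n) (Fin n) (LaurentSeries ℂ))
    (hψ00 : ψ 0 0 = HahnSeries.C aRes * (xCoord)⁻¹ + h₀)
    (hψrow : ∀ j : Fin n, j ≠ 0 → ψ 0 j = 0)
    (hψcol : ∀ j : Fin n, j ≠ 0 → ψ j 0 = 0)
    (hψint : ∀ i j : Fin n, i ≠ 0 → j ≠ 0 → ψ i j ∈ holGerms) :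
    {M : Matrix (Fin n) (Fin n) (LaurentSeries ℂ) |
        ∃ α β : Matrix (Fin n) (Fin n) (LaurentSeries ℂ),
          (∀ i j, α i j ∈ holGerms) ∧ (∀ i j, β i j ∈ holGerms) ∧
          M = β + (α * ψ - ψ * α)} =
    {M : Matrix (Fin n) (Fin n) (LaurentSeries ℂ) |
        M 0 0 ∈ holGerms ∧
        (∀ i j : Fin n, i ≠ 0 → j ≠ 0 → M i j ∈ holGerms) ∧
        (∀ j : Fin n, j ≠ 0 → xCoord * M 0 j ∈ holGerms ∧ xCoord * M j 0 ∈ holGerms)} := by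
  have hu : (HahnSeries.C aRes : LaurentSeries ℂ) ≠ 0 := by
    simpa using h_res_ne
  have hu' : (HahnSeries.C aRes : LaurentSeries ℂ)⁻¹ ∈ holGerms := by
    rw [← map_inv₀]
    exact C_mem_holGerms _
  have hxψ : xCoord * ψ 0 0 ∈ holGerms := by
    rw [hψ00, mul_add, mul_left_comm, mul_inv_cancel₀ xCoord_ne_zero, mul_one]
    exact holGerms.add_mem (C_mem_holGerms aRes) (holGerms.mul_mem xCoord_mem_holGerms h_h₀)
  exact (holCommutatorSpan_subset_hookPoleMatrices xCoord_mem_holGerms hxψ hψrow hψcol hψint).antisymm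
    (hookPoleMatrices_subset_holCommutatorSpan xCoord_mem_holGerms xCoord_ne_zero hu hu' h_h₀ hψ00 hψrow
      hψcol hψint)
end
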